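/- arXiv:2005.11533 — 3 statements merged into one kernel-verified Lean document; each statement's English description precedes it below -/
import Mathlib

section
/- Let R be a Dedekind domain with field of fractions k, let Λ be an R-order, and let 0 → M₁ → M₂ → N → 0 be a short exact sequence of finitely generated Λ-modules in which M₁ and M₂ are Λ-lattices and N is R-torsion. Then the map Hom_R(M₂, R) → Hom_R(M₁, R) induced by the injection M₁ → M₂ is injective, and N^∨ = Hom_R(N, k/R) is canonically isomorphic as a Λ^op-module to its cokernel Hom_R(M₁, R)/Hom_R(M₂, R). -/
/-!
STATEMENT 4: Let R be a Dedekind domain with field of fractions k, let Λ be an R-order,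
and let 0 → M₁ → M₂ → N → 0 be a short exact sequence of finitely generated Λ-modules in
which M₁ and M₂ are Λ-lattices and N is R-torsion.  Then the map
Hom_R(M₂,R) → Hom_R(M₁,R) induced by the injection M₁ → M₂ is injective, and
N^∨ = Hom_R(N, k/R) is canonically isomorphic as a Λᵒᵖ-module to its cokernel
Hom_R(M₁,R)/Hom_R(M₂,R).

The `Λᵒᵖ`-module structures on `Hom_R(N, k/R)` and on the cokernel (given by
`(f·λ)(m) = f(λm)`) are universally quantified and pinned down by pointwise
characterizations.  `k/R` is formalized as `k ⧸ range (algebraMap R k)`, and canonicity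
of the isomorphism `e` is expressed by the snake-lemma description: if `f̃ : M₂ → k`
lifts `φ ∘ g : M₂ → k/R` and `ψ : M₁ → R` satisfies `algebraMap ψ = f̃ ∘ f`, then
`e φ = [ψ]`.
-/
set_option maxHeartbeats 3000000 in
theorem stmt4 (R : Type) [CommRing R] [IsDomain R] [IsDedekindDomain R]
    (k : Type) [Field k] [Algebra R k] [IsFractionRing R k]
    (Λ : Type) [Ring Λ] [Algebra R Λ] [Module.Finite R Λ] [Module.Projective R Λ]
    (M₁ M₂ N : Type)
    [AddCommGroup M₁] [Module Λ M₁] [Module R M₁] [IsScalarTower R Λ M₁]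
      [Module.Finite Λ M₁] [Module.Projective R M₁]
    [AddCommGroup M₂] [Module Λ M₂] [Module R M₂] [IsScalarTower R Λ M₂]
      [Module.Finite Λ M₂] [Module.Projective R M₂]
    [AddCommGroup N] [Module Λ N] [Module R N] [IsScalarTower R Λ N] [Module.Finite Λ N]
    (htors : ∀ x : N, ∃ r : R, r ≠ 0 ∧ r • x = 0)
    (f : M₁ →ₗ[Λ] M₂) (g : M₂ →ₗ[Λ] N)
    (hf : Function.Injective f) (hg : Function.Surjective g) (hfg : Function.Exact f g)
    -- the Λᵒᵖ-module structure on N^∨ = Hom_R(N, k/R)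
    [mDual : Module Λᵐᵒᵖ (N →ₗ[R] (k ⧸ LinearMap.range (Algebra.linearMap R k)))]
    (hmDual : ∀ (l : Λ) (φ : N →ₗ[R] (k ⧸ LinearMap.range (Algebra.linearMap R k))) (x : N),
      ((MulOpposite.op l • φ) x) = φ (l • x))
    -- the Λᵒᵖ-module structure on the cokernel Hom_R(M₁,R)/Hom_R(M₂,R)
    [mCoker : Module Λᵐᵒᵖ ((M₁ →ₗ[R] R) ⧸
      LinearMap.range (LinearMap.lcomp R R (f.restrictScalars R)))]
    (hmCoker : ∀ (l : Λ) (ψ ψ' : M₁ →ₗ[R] R), (∀ x : M₁, ψ' x = ψ (l • x)) →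
      MulOpposite.op l • (Submodule.Quotient.mk ψ :
          (M₁ →ₗ[R] R) ⧸ LinearMap.range (LinearMap.lcomp R R (f.restrictScalars R))) =
        Submodule.Quotient.mk ψ') :
    Function.Injective (LinearMap.lcomp R R (f.restrictScalars R) :
        (M₂ →ₗ[R] R) →ₗ[R] (M₁ →ₗ[R] R)) ∧
      ∃ e : (N →ₗ[R] (k ⧸ LinearMap.range (Algebra.linearMap R k))) ≃+
          ((M₁ →ₗ[R] R) ⧸ LinearMap.range (LinearMap.lcomp R R (f.restrictScalars R))),
        (∀ (l : Λ) (φ : N →ₗ[R] (k ⧸ LinearMap.range (Algebra.linearMap R k))),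
          e (MulOpposite.op l • φ) = MulOpposite.op l • e φ) ∧
        (∀ (φ : N →ₗ[R] (k ⧸ LinearMap.range (Algebra.linearMap R k)))
            (ft : M₂ →ₗ[R] k)
            (_ : ∀ m₂ : M₂, (Submodule.Quotient.mk (ft m₂) :
                k ⧸ LinearMap.range (Algebra.linearMap R k)) = φ (g m₂))
            (ψ : M₁ →ₗ[R] R)
            (_ : ∀ m₁ : M₁, algebraMap R k (ψ m₁) = ft (f m₁)),
          e φ = Submodule.Quotient.mk ψ) := by
  classical
  have halg_inj : Function.Injective (algebraMap R k) := IsFractionRing.injective R k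
  have hAinj : Function.Injective (Algebra.linearMap R k) := halg_inj
  have hf'inj : Function.Injective (f.restrictScalars R) := hf
  have hg'surj : Function.Surjective (g.restrictScalars R) := hg
  have hker : LinearMap.ker (g.restrictScalars R) = LinearMap.range (f.restrictScalars R) := by
    ext x
    simp only [LinearMap.mem_ker, LinearMap.mem_range, LinearMap.restrictScalars_apply]
    exact hfg x
  -- torsion elements pull back into the range of (f.restrictScalars R)
  have hT : ∀ (m₂ : M₂) (r : R), r • (g m₂) = 0 → r • m₂ ∈ LinearMap.range (f.restrictScalars R) := by
    intro m₂ r h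
    rw [← hker, LinearMap.mem_ker]
    show (g.restrictScalars R) (r • m₂) = 0
    rw [map_smul]
    exact h
  -- Part 1: injectivity
  have hinj1 : Function.Injective (LinearMap.lcomp R R (f.restrictScalars R) :
      (M₂ →ₗ[R] R) →ₗ[R] (M₁ →ₗ[R] R)) := by
    intro χ₁ χ₂ hχ
    ext m₂
    obtain ⟨r, hr, hrg⟩ := htors (g m₂)
    obtain ⟨m₁, hm₁⟩ := hT m₂ r hrg
    have h1 : χ₁ (r • m₂) = χ₂ (r • m₂) := by
      rw [← hm₁]
      simpa using DFunLike.congr_fun hχ m₁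
    rw [map_smul, map_smul] at h1
    exact mul_left_cancel₀ hr (by simpa [smul_eq_mul] using h1)
  refine ⟨hinj1, ?_⟩
  -- sections of (Algebra.linearMap R k) and (f.restrictScalars R)
  set eA : R ≃ₗ[R] LinearMap.range (Algebra.linearMap R k) := LinearEquiv.ofInjective (Algebra.linearMap R k) hAinj with heA
  have hsecA : ∀ y : LinearMap.range (Algebra.linearMap R k), (Algebra.linearMap R k) (eA.symm y) = (y : k) := by
    intro y
    conv_rhs => rw [← eA.apply_symm_apply y]
    rfl
  set ef : M₁ ≃ₗ[R] LinearMap.range (f.restrictScalars R) := LinearEquiv.ofInjective (f.restrictScalars R) hf'inj with hef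
  have hsecf : ∀ y : LinearMap.range (f.restrictScalars R), (f.restrictScalars R) (ef.symm y) = (y : M₂) := by
    intro y
    conv_rhs => rw [← ef.apply_symm_apply y]
    rfl
  have toR1 : ∀ L : M₁ →ₗ[R] k, (∀ m₁, L m₁ ∈ LinearMap.range (Algebra.linearMap R k)) →
      ∃ ψ : M₁ →ₗ[R] R, ∀ m₁, (Algebra.linearMap R k) (ψ m₁) = L m₁ := by
    intro L h
    refine ⟨eA.symm.toLinearMap ∘ₗ LinearMap.codRestrict _ L h, fun m₁ => ?_⟩
    exact hsecA ⟨L m₁, h m₁⟩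
  have toR2 : ∀ L : M₂ →ₗ[R] k, (∀ m₂, L m₂ ∈ LinearMap.range (Algebra.linearMap R k)) →
      ∃ χ : M₂ →ₗ[R] R, ∀ m₂, (Algebra.linearMap R k) (χ m₂) = L m₂ := by
    intro L h
    refine ⟨eA.symm.toLinearMap ∘ₗ LinearMap.codRestrict _ L h, fun m₂ => ?_⟩
    exact hsecA ⟨L m₂, h m₂⟩
  -- lifting data exists for every φ
  have exlift : ∀ φ : N →ₗ[R] (k ⧸ LinearMap.range (Algebra.linearMap R k)),
      ∃ (ft : M₂ →ₗ[R] k) (ψ : M₁ →ₗ[R] R),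
        (∀ m₂, (Submodule.Quotient.mk (ft m₂) : k ⧸ LinearMap.range (Algebra.linearMap R k)) = φ (g m₂)) ∧
        (∀ m₁, algebraMap R k (ψ m₁) = ft (f m₁)) := by
    intro φ
    obtain ⟨ft, hft⟩ := Module.projective_lifting_property (LinearMap.range (Algebra.linearMap R k)).mkQ
      (φ ∘ₗ (g.restrictScalars R)) (Submodule.mkQ_surjective _)
    have hft' : ∀ m₂, (Submodule.Quotient.mk (ft m₂) : k ⧸ LinearMap.range (Algebra.linearMap R k)) = φ (g m₂) := by
      intro m₂
      have := DFunLike.congr_fun hft m₂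
      simpa using this
    have hmem : ∀ m₁, (ft ∘ₗ (f.restrictScalars R)) m₁ ∈ LinearMap.range (Algebra.linearMap R k) := by
      intro m₁
      rw [← Submodule.Quotient.mk_eq_zero]
      have h1 : (Submodule.Quotient.mk ((ft ∘ₗ (f.restrictScalars R)) m₁) : k ⧸ LinearMap.range (Algebra.linearMap R k))
          = φ (g (f m₁)) := hft' (f m₁)
      rw [h1, hfg.apply_apply_eq_zero m₁, map_zero]
    obtain ⟨ψ, hψ⟩ := toR1 (ft ∘ₗ (f.restrictScalars R)) hmem
    exact ⟨ft, ψ, hft', fun m₁ => hψ m₁⟩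
  -- well-definedness
  have wd : ∀ (φ : N →ₗ[R] (k ⧸ LinearMap.range (Algebra.linearMap R k))) (ft₁ ft₂ : M₂ →ₗ[R] k)
      (ψ₁ ψ₂ : M₁ →ₗ[R] R),
      (∀ m₂, (Submodule.Quotient.mk (ft₁ m₂) : k ⧸ LinearMap.range (Algebra.linearMap R k)) = φ (g m₂)) →
      (∀ m₂, (Submodule.Quotient.mk (ft₂ m₂) : k ⧸ LinearMap.range (Algebra.linearMap R k)) = φ (g m₂)) →
      (∀ m₁, algebraMap R k (ψ₁ m₁) = ft₁ (f m₁)) →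
      (∀ m₁, algebraMap R k (ψ₂ m₁) = ft₂ (f m₁)) →
      (Submodule.Quotient.mk ψ₁ :
        (M₁ →ₗ[R] R) ⧸ LinearMap.range (LinearMap.lcomp R R (f.restrictScalars R))) = Submodule.Quotient.mk ψ₂ := by
    intro φ ft₁ ft₂ ψ₁ ψ₂ h1 h2 k1 k2
    have hd : ∀ m₂, (ft₁ - ft₂) m₂ ∈ LinearMap.range (Algebra.linearMap R k) := by
      intro m₂
      rw [LinearMap.sub_apply, ← Submodule.Quotient.mk_eq_zero, Submodule.Quotient.mk_sub,
        h1 m₂, h2 m₂, sub_self]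
    obtain ⟨χ, hχ⟩ := toR2 (ft₁ - ft₂) hd
    rw [Submodule.Quotient.eq]
    refine ⟨χ, ?_⟩
    ext m₁
    apply halg_inj
    have := hχ (f m₁)
    rw [LinearMap.sub_apply] at this
    show algebraMap R k (χ ((f.restrictScalars R) m₁)) = algebraMap R k ((ψ₁ - ψ₂) m₁)
    rw [LinearMap.sub_apply, map_sub, k1 m₁, k2 m₁]
    simpa using this
  -- the forward map
  set E₀ : (N →ₗ[R] (k ⧸ LinearMap.range (Algebra.linearMap R k))) →
      ((M₁ →ₗ[R] R) ⧸ LinearMap.range (LinearMap.lcomp R R (f.restrictScalars R))) :=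
    fun φ => Submodule.Quotient.mk (exlift φ).choose_spec.choose with hE₀
  have Espec : ∀ (φ : N →ₗ[R] (k ⧸ LinearMap.range (Algebra.linearMap R k))) (ft : M₂ →ₗ[R] k) (ψ : M₁ →ₗ[R] R),
      (∀ m₂, (Submodule.Quotient.mk (ft m₂) : k ⧸ LinearMap.range (Algebra.linearMap R k)) = φ (g m₂)) →
      (∀ m₁, algebraMap R k (ψ m₁) = ft (f m₁)) →
      E₀ φ = Submodule.Quotient.mk ψ := by
    intro φ ft ψ h1 h2
    obtain ⟨c1, c2⟩ := (exlift φ).choose_spec.choose_spec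
    exact wd φ _ ft _ ψ c1 h1 c2 h2
  have Eadd : ∀ φ₁ φ₂, E₀ (φ₁ + φ₂) = E₀ φ₁ + E₀ φ₂ := by
    intro φ₁ φ₂
    obtain ⟨ft₁, ψ₁, h11, h12⟩ := exlift φ₁
    obtain ⟨ft₂, ψ₂, h21, h22⟩ := exlift φ₂
    rw [Espec φ₁ ft₁ ψ₁ h11 h12, Espec φ₂ ft₂ ψ₂ h21 h22,
      Espec (φ₁ + φ₂) (ft₁ + ft₂) (ψ₁ + ψ₂)
        (by intro m₂; simp [Submodule.Quotient.mk_add, h11 m₂, h21 m₂])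
        (by intro m₁; simp [map_add, h12 m₁, h22 m₁]),
      Submodule.Quotient.mk_add]
  have Ezero : E₀ 0 = 0 := by
    rw [Espec 0 0 0 (by intro m₂; simp) (by intro m₁; simp)]
    exact (Submodule.Quotient.mk_eq_zero _).mpr (zero_mem _)
  -- injectivity of E₀
  have Einj : ∀ φ, E₀ φ = 0 → φ = 0 := by
    intro φ h0
    obtain ⟨ft, ψ, h1, h2⟩ := exlift φ
    rw [Espec φ ft ψ h1 h2, Submodule.Quotient.mk_eq_zero, LinearMap.mem_range] at h0
    obtain ⟨χ, hχ⟩ := h0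
    have hχ' : ∀ m₁, χ (f m₁) = ψ m₁ := by
      intro m₁
      simpa using DFunLike.congr_fun hχ m₁
    have hd : ∀ m₂, ft m₂ = algebraMap R k (χ m₂) := by
      intro m₂
      obtain ⟨r, hr, hrg⟩ := htors (g m₂)
      obtain ⟨m₁, hm₁⟩ := hT m₂ r hrg
      have h3 : ft (r • m₂) = algebraMap R k (χ (r • m₂)) := by
        rw [← hm₁]
        show ft ((f.restrictScalars R) m₁) = algebraMap R k (χ ((f.restrictScalars R) m₁))
        have e1 : ((f.restrictScalars R) m₁ : M₂) = f m₁ := rfl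
        rw [e1, ← h2 m₁, hχ' m₁]
      rw [map_smul, map_smul, smul_eq_mul, map_mul] at h3
      have h5 : algebraMap R k r ≠ 0 := fun h => hr (halg_inj (by rw [h, map_zero]))
      have h6 : algebraMap R k r * ft m₂ = algebraMap R k r * algebraMap R k (χ m₂) := by
        rw [← Algebra.smul_def]
        exact h3
      exact mul_left_cancel₀ h5 h6
    ext n
    obtain ⟨m₂, rfl⟩ := hg n
    show φ (g m₂) = 0
    rw [← h1 m₂, hd m₂, Submodule.Quotient.mk_eq_zero]
    exact ⟨χ m₂, rfl⟩
  -- surjectivity : a uniform denominator r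
  haveI hMfin : Module.Finite R M₂ := Module.Finite.trans Λ M₂
  obtain ⟨n, v, hv⟩ := Module.Finite.exists_fin (R := R) (M := M₂)
  choose rr hrr0 hrrz using fun i => htors (g (v i))
  set r : R := ∏ i, rr i with hrdef
  have hr0 : r ≠ 0 := Finset.prod_ne_zero_iff.mpr fun i _ => hrr0 i
  have hrkill : ∀ x : N, r • x = 0 := by
    intro x
    have hspan : Submodule.span R (⇑(g.restrictScalars R) '' Set.range v) = ⊤ := by
      rw [← Submodule.map_span, hv, Submodule.map_top, LinearMap.range_eq_top]
      exact hg'surj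
    have hx : x ∈ Submodule.span R (⇑(g.restrictScalars R) '' Set.range v) := by rw [hspan]; trivial
    induction hx using Submodule.span_induction with
    | mem y hy =>
      obtain ⟨m, ⟨i, rfl⟩, rfl⟩ := hy
      have : r = (∏ j ∈ Finset.univ.erase i, rr j) * rr i :=
        (Finset.prod_erase_mul Finset.univ rr (Finset.mem_univ i)).symm
      rw [this, mul_smul]
      show (∏ j ∈ Finset.univ.erase i, rr j) • (rr i • g (v i)) = 0
      rw [hrrz i, smul_zero]
    | zero => simp
    | add y z _ _ hy hz => rw [smul_add, hy, hz, add_zero]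
    | smul c y _ hy => rw [smul_comm, hy, smul_zero]
  have hrT : ∀ m₂ : M₂, r • m₂ ∈ LinearMap.range (f.restrictScalars R) := fun m₂ => hT m₂ r (hrkill (g m₂))
  have hAr0 : algebraMap R k r ≠ 0 := fun h => hr0 (halg_inj (by rw [h, map_zero]))
  -- extension of maps M₁ → R to M₂ → k
  have extend : ∀ ψ : M₁ →ₗ[R] R, ∃ ft : M₂ →ₗ[R] k,
      ∀ m₁, algebraMap R k (ψ m₁) = ft (f m₁) := by
    intro ψ
    set u : M₂ →ₗ[R] M₁ :=
      ef.symm.toLinearMap ∘ₗ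
        LinearMap.codRestrict (LinearMap.range (f.restrictScalars R)) (LinearMap.lsmul R M₂ r)
          (fun c => hrT c) with hu_def
    have hu : ∀ m₂, (f.restrictScalars R) (u m₂) = r • m₂ := by
      intro m₂
      exact hsecf ⟨r • m₂, hrT m₂⟩
    refine ⟨(algebraMap R k r)⁻¹ • ((Algebra.linearMap R k) ∘ₗ ψ ∘ₗ u), fun m₁ => ?_⟩
    have h1 : u (f m₁) = r • m₁ := by
      apply hf'inj
      rw [hu (f m₁), map_smul]
      rfl
    show algebraMap R k (ψ m₁) = (algebraMap R k r)⁻¹ • ((Algebra.linearMap R k) (ψ (u (f m₁))))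
    rw [h1, map_smul, map_smul]
    show algebraMap R k (ψ m₁)
      = (algebraMap R k r)⁻¹ • (r • (algebraMap R k (ψ m₁)))
    rw [Algebra.smul_def r, smul_eq_mul, inv_mul_cancel_left₀ hAr0]
  -- surjectivity of E₀
  have Esurj : ∀ c : (M₁ →ₗ[R] R) ⧸ LinearMap.range (LinearMap.lcomp R R (f.restrictScalars R)),
      ∃ φ, E₀ φ = c := by
    intro c
    obtain ⟨ψ, rfl⟩ := Submodule.Quotient.mk_surjective _ c
    obtain ⟨ft, hft⟩ := extend ψ
    set D : M₂ →ₗ[R] (k ⧸ LinearMap.range (Algebra.linearMap R k)) := (LinearMap.range (Algebra.linearMap R k)).mkQ ∘ₗ ft with hD_def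
    have hD : LinearMap.ker (g.restrictScalars R) ≤ LinearMap.ker D := by
      rw [hker]
      rintro x ⟨m₁, rfl⟩
      show D ((f.restrictScalars R) m₁) = 0
      have : D ((f.restrictScalars R) m₁) = Submodule.Quotient.mk (ft (f m₁)) := rfl
      rw [this, ← hft m₁, Submodule.Quotient.mk_eq_zero]
      exact ⟨ψ m₁, rfl⟩
    set G : (M₂ ⧸ LinearMap.ker (g.restrictScalars R)) →ₗ[R] N := (LinearMap.ker (g.restrictScalars R)).liftQ (g.restrictScalars R) le_rfl with hG_def
    have hGapp : ∀ m₂ : M₂, G (Submodule.Quotient.mk m₂) = g m₂ := fun m₂ => rfl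
    have hGb : Function.Bijective G := by
      constructor
      · intro a b hab
        obtain ⟨x, rfl⟩ := Submodule.Quotient.mk_surjective _ a
        obtain ⟨y, rfl⟩ := Submodule.Quotient.mk_surjective _ b
        rw [Submodule.Quotient.eq]
        rw [hGapp, hGapp] at hab
        rw [LinearMap.mem_ker, map_sub]
        show g x - g y = 0
        rw [hab, sub_self]
      · intro y
        obtain ⟨m₂, rfl⟩ := hg'surj y
        exact ⟨Submodule.Quotient.mk m₂, hGapp m₂⟩
    set eG : (M₂ ⧸ LinearMap.ker (g.restrictScalars R)) ≃ₗ[R] N := LinearEquiv.ofBijective G hGb with heG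
    set φ : N →ₗ[R] (k ⧸ LinearMap.range (Algebra.linearMap R k)) :=
      ((LinearMap.ker (g.restrictScalars R)).liftQ D hD) ∘ₗ (eG.symm : N →ₗ[R] (M₂ ⧸ LinearMap.ker (g.restrictScalars R)))
      with hφ_def
    have hφ : ∀ m₂, (Submodule.Quotient.mk (ft m₂) : k ⧸ LinearMap.range (Algebra.linearMap R k)) = φ (g m₂) := by
      intro m₂
      have h1 : eG.symm (g m₂) = Submodule.Quotient.mk m₂ := by
        apply eG.injective
        rw [eG.apply_symm_apply]
        exact (hGapp m₂).symm
      show (Submodule.Quotient.mk (ft m₂) : k ⧸ LinearMap.range (Algebra.linearMap R k))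
        = ((LinearMap.ker (g.restrictScalars R)).liftQ D hD) (eG.symm (g m₂))
      rw [h1]
      rfl
    exact ⟨φ, Espec φ ft ψ hφ hft⟩
  -- Λᵒᵖ-equivariance
  haveI hsc1 : SMulCommClass R Λ M₁ := IsScalarTower.to_smulCommClass
  haveI hsc2 : SMulCommClass R Λ M₂ := IsScalarTower.to_smulCommClass
  haveI hsc1' : SMulCommClass Λ R M₁ := SMulCommClass.symm R Λ M₁
  haveI hsc2' : SMulCommClass Λ R M₂ := SMulCommClass.symm R Λ M₂
  have Ecompat : ∀ (l : Λ) (φ : N →ₗ[R] (k ⧸ LinearMap.range (Algebra.linearMap R k))),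
      E₀ (MulOpposite.op l • φ) = MulOpposite.op l • E₀ φ := by
    intro l φ
    obtain ⟨ft, ψ, h1, h2⟩ := exlift φ
    set L₂ : M₂ →ₗ[R] M₂ :=
      { toFun := fun m => l • m
        map_add' := fun a b => smul_add l a b
        map_smul' := fun rr m => (smul_comm rr l m).symm } with hL₂
    set L₁ : M₁ →ₗ[R] M₁ :=
      { toFun := fun m => l • m
        map_add' := fun a b => smul_add l a b
        map_smul' := fun rr m => (smul_comm rr l m).symm } with hL₁
    have c1 : ∀ m₂, (Submodule.Quotient.mk ((ft ∘ₗ L₂) m₂) : k ⧸ LinearMap.range (Algebra.linearMap R k))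
        = (MulOpposite.op l • φ) (g m₂) := by
      intro m₂
      rw [hmDual l φ (g m₂)]
      have : l • g m₂ = g (l • m₂) := (map_smul g l m₂).symm
      rw [this]
      exact h1 (l • m₂)
    have c2 : ∀ m₁, algebraMap R k ((ψ ∘ₗ L₁) m₁) = (ft ∘ₗ L₂) (f m₁) := by
      intro m₁
      show algebraMap R k (ψ (l • m₁)) = ft (l • f m₁)
      rw [← map_smul f l m₁]
      exact h2 (l • m₁)
    rw [Espec _ _ _ c1 c2, Espec φ ft ψ h1 h2]
    exact (hmCoker l ψ (ψ ∘ₗ L₁) (fun x => rfl)).symm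
  -- assemble
  set Ehom : (N →ₗ[R] (k ⧸ LinearMap.range (Algebra.linearMap R k))) →+
      ((M₁ →ₗ[R] R) ⧸ LinearMap.range (LinearMap.lcomp R R (f.restrictScalars R))) :=
    { toFun := E₀, map_zero' := Ezero, map_add' := Eadd } with hEhom
  have hbij : Function.Bijective Ehom :=
    ⟨(injective_iff_map_eq_zero Ehom).mpr Einj, Esurj⟩
  refine ⟨AddEquiv.ofBijective Ehom hbij, ?_, ?_⟩
  · intro l φ
    show E₀ (MulOpposite.op l • φ) = MulOpposite.op l • E₀ φ
    exact Ecompat l φ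
  · intro φ ft h1 ψ h2
    show E₀ φ = Submodule.Quotient.mk ψ
    exact Espec φ ft ψ h1 h2
end

section
/- Let R be a Dedekind domain and let Λ be an R-order. The contravariant functor sending a Λ-lattice M to the Λ^op-lattice M* = Hom_R(M, R), and a morphism f : M → N to the map N* → M*, ν ↦ ν ∘ f, is exact on short exact sequences of Λ-lattices, and it induces a group isomorphism σ : G₀^R(Λ) → G₀^R(Λ^op) between the Grothendieck groups of the categories of Λ-lattices and of Λ^op-lattices. -/
/-- A bundled `Λ`-lattice over an `R`-order `Λ`: a finitely generated `Λ`-module that is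
projective as an `R`-module. -/
structure LatMod (R Λ : Type) [CommRing R] [Ring Λ] [Algebra R Λ] : Type 1 where
  carrier : Type
  [isAddCommGroup : AddCommGroup carrier]
  [isModule : Module Λ carrier]
  [isRModule : Module R carrier]
  [isTower : IsScalarTower R Λ carrier]
  [isFinite : Module.Finite Λ carrier]
  [isProjective : Module.Projective R carrier]

attribute [instance] LatMod.isAddCommGroup LatMod.isModule LatMod.isRModule
  LatMod.isTower LatMod.isFinite LatMod.isProjective

/-- The relations defining the Grothendieck group `G₀^R(Λ)` of the category of
`Λ`-lattices: one relation `[M] = [L] + [N]` for each short exact sequence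
`0 → L → M → N → 0` of `Λ`-lattices. -/
def G0LatRel (R Λ : Type) [CommRing R] [Ring Λ] [Algebra R Λ] :
    AddSubgroup (FreeAbelianGroup (LatMod R Λ)) :=
  AddSubgroup.closure
    { x | ∃ (L M N : LatMod R Λ) (f : L.carrier →ₗ[Λ] M.carrier)
            (g : M.carrier →ₗ[Λ] N.carrier),
        Function.Injective f ∧ Function.Surjective g ∧ Function.Exact f g ∧
        x = FreeAbelianGroup.of M - FreeAbelianGroup.of L - FreeAbelianGroup.of N }

/-- The Grothendieck group `G₀^R(Λ)` of the category of `Λ`-lattices. -/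
def G0Lat (R Λ : Type) [CommRing R] [Ring Λ] [Algebra R Λ] : Type 1 :=
  FreeAbelianGroup (LatMod R Λ) ⧸ G0LatRel R Λ

instance (R Λ : Type) [CommRing R] [Ring Λ] [Algebra R Λ] : AddCommGroup (G0Lat R Λ) :=
  QuotientAddGroup.Quotient.addCommGroup _

/-- The class `[M] ∈ G₀^R(Λ)` of a `Λ`-lattice `M`. -/
def G0Lat.cls (R Λ : Type) [CommRing R] [Ring Λ] [Algebra R Λ] (M : Type)
    [AddCommGroup M] [Module Λ M] [Module R M] [IsScalarTower R Λ M]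
    [Module.Finite Λ M] [Module.Projective R M] : G0Lat R Λ :=
  QuotientAddGroup.mk (FreeAbelianGroup.of (LatMod.mk M))

/-!
STATEMENT 5: Let R be a Dedekind domain and let Λ be an R-order.  The contravariant
functor sending a Λ-lattice M to the Λᵒᵖ-lattice M* = Hom_R(M,R), and a morphism
f : M → N to ν ↦ ν ∘ f, is exact on short exact sequences of Λ-lattices, and it induces
a group isomorphism σ : G₀^R(Λ) → G₀^R(Λᵒᵖ).

The first conjunct expresses exactness of the duality functor; the second asserts the
existence of an additive isomorphism `σ` sending, for every Λ-lattice `M` and every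
Λᵒᵖ-module structure on `M* = M →ₗ[R] R` satisfying the defining pointwise formula
`(ν·λ)(m) = ν(λm)` (together with the facts that `M*` is again a lattice, quantified as
instance arguments), the class `[M]` to `[M*]`.
-/

namespace Stmt5Aux

open Function

section Exactness

variable (R : Type) [CommRing R] {L M N : Type}
  [AddCommGroup L] [AddCommGroup M] [AddCommGroup N]
  [Module R L] [Module R M] [Module R N] [Module.Projective R N]
  (f : L →ₗ[R] M) (g : M →ₗ[R] N)

theorem dual_inj (hg : Surjective g) :
    Injective (fun ν : N →ₗ[R] R => ν.comp g) := by
  intro ν₁ ν₂ h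
  ext n
  obtain ⟨m, rfl⟩ := hg n
  exact congrArg (fun μ : M →ₗ[R] R => μ m) h

theorem dual_surj (hf : Injective f) (hfg : Exact f g) (hg : Surjective g) :
    Surjective (fun ν : M →ₗ[R] R => ν.comp f) := by
  obtain ⟨s, hs⟩ := Module.projective_lifting_property g LinearMap.id hg
  set π : M →ₗ[R] M := LinearMap.id - s ∘ₗ g with hπ
  have hπmem : ∀ m, π m ∈ LinearMap.range f := by
    intro m
    have hgs : g (s (g m)) = g m := congrArg (fun h : N →ₗ[R] N => h (g m)) hs
    have : g (π m) = 0 := by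
      simp [hπ, LinearMap.sub_apply, hgs]
    simpa [LinearMap.mem_range] using (hfg (π m)).mp this
  set e := LinearEquiv.ofInjective f hf with he
  set π' : M →ₗ[R] LinearMap.range f := π.codRestrict _ hπmem with hπ'
  set ρ : M →ₗ[R] L := (e.symm : LinearMap.range f →ₗ[R] L) ∘ₗ π' with hρdef
  have hρ : ∀ l, ρ (f l) = l := by
    intro l
    have h1 : g (f l) = 0 := hfg.apply_apply_eq_zero l
    have h2 : π (f l) = f l := by simp [hπ, LinearMap.sub_apply, h1]
    have h3 : π' (f l) = e l := by
      apply Subtype.ext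
      simp [hπ', LinearMap.codRestrict_apply, h2, he, LinearEquiv.ofInjective_apply]
    simp [hρdef, LinearMap.comp_apply, h3]
  intro μ
  refine ⟨μ.comp ρ, ?_⟩
  ext l
  simp [LinearMap.comp_apply, hρ]

theorem dual_exact (hf : Injective f) (hfg : Exact f g) (hg : Surjective g) :
    Exact (fun ν : N →ₗ[R] R => ν.comp g) (fun ν : M →ₗ[R] R => ν.comp f) := by
  obtain ⟨s, hs⟩ := Module.projective_lifting_property g LinearMap.id hg
  intro ν
  constructor
  · intro hν
    refine ⟨ν.comp s, ?_⟩
    ext m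
    have hgs : g (s (g m)) = g m := congrArg (fun h : N →ₗ[R] N => h (g m)) hs
    have hmem : m - s (g m) ∈ LinearMap.range f := by
      have : g (m - s (g m)) = 0 := by simp [map_sub, hgs]
      simpa [LinearMap.mem_range] using (hfg _).mp this
    obtain ⟨l, hl⟩ := hmem
    have hν0 : ν (f l) = 0 := congrArg (fun μ : L →ₗ[R] R => μ l) hν
    have : ν (m - s (g m)) = 0 := by rw [← hl]; exact hν0
    have := sub_eq_zero.mp (by simpa [map_sub] using this)
    simpa [LinearMap.comp_apply] using this.symm
  · rintro ⟨η, rfl⟩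
    ext l
    simp [LinearMap.comp_apply, hfg.apply_apply_eq_zero l]

end Exactness

section G0

variable (R : Type) [CommRing R] (Λ : Type) [Ring Λ] [Algebra R Λ]

/-- The class of a bundled lattice. -/
def clsB (M : LatMod R Λ) : G0Lat R Λ :=
  QuotientAddGroup.mk (FreeAbelianGroup.of M)

variable {R Λ}

theorem clsB_rel (L M N : LatMod R Λ) (f : L.carrier →ₗ[Λ] M.carrier)
    (g : M.carrier →ₗ[Λ] N.carrier) (hf : Injective f) (hg : Surjective g)
    (hfg : Exact f g) : clsB R Λ M = clsB R Λ L + clsB R Λ N := by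
  have hmem : (FreeAbelianGroup.of M - FreeAbelianGroup.of L - FreeAbelianGroup.of N)
      ∈ G0LatRel R Λ :=
    AddSubgroup.subset_closure ⟨L, M, N, f, g, hf, hg, hfg, rfl⟩
  have h0 : (QuotientAddGroup.mk (FreeAbelianGroup.of M - FreeAbelianGroup.of L
      - FreeAbelianGroup.of N) : G0Lat R Λ) = 0 :=
    (QuotientAddGroup.eq_zero_iff _).mpr hmem
  have : clsB R Λ M - clsB R Λ L - clsB R Λ N = 0 := h0
  rwa [sub_sub, sub_eq_zero] at this

/-- The zero lattice. -/
abbrev zeroLat : LatMod R Λ := LatMod.mk PUnit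

theorem clsB_zeroLat : clsB R Λ (zeroLat : LatMod R Λ) = 0 := by
  have h := clsB_rel (zeroLat : LatMod R Λ) zeroLat zeroLat 0 0
    (fun a b _ => Subsingleton.elim a b)
    (fun n => ⟨0, Subsingleton.elim _ _⟩)
    (fun y => by
      constructor
      · intro _; exact ⟨0, Subsingleton.elim _ _⟩
      · intro _; exact Subsingleton.elim _ _)
  have := h
  exact (add_eq_right.mp this.symm)

theorem clsB_congr (A B : LatMod R Λ) (e : A.carrier ≃ₗ[Λ] B.carrier) :
    clsB R Λ A = clsB R Λ B := by
  have h := clsB_rel A B (zeroLat : LatMod R Λ) e.toLinearMap 0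
    e.injective
    (fun n => ⟨0, Subsingleton.elim _ _⟩)
    (fun y => by
      constructor
      · intro _; exact ⟨e.symm y, e.apply_symm_apply y⟩
      · intro _; exact Subsingleton.elim _ _)
  rw [h, clsB_zeroLat, add_zero]

end G0


/-! ### The dual lattice -/

section Dual

variable (R : Type) [CommRing R] {Γ Γ' : Type} [Ring Γ] [Algebra R Γ]
  [Ring Γ'] [Algebra R Γ']

/-- An `R`-linear ring anti-homomorphism, unbundled. -/
structure IsAntiAlgHom (a : Γ' → Γ) : Prop where
  map_one : a 1 = 1
  map_mul : ∀ x y, a (x * y) = a y * a x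
  map_add : ∀ x y, a (x + y) = a x + a y
  map_zero : a 0 = 0
  map_alg : ∀ r : R, a (algebraMap R Γ' r) = algebraMap R Γ r

variable (a : Γ' → Γ) (ha : IsAntiAlgHom R a)

section DMod

variable (M : Type) [AddCommGroup M] [Module Γ M] [Module R M] [IsScalarTower R Γ M]

/-- Scalar multiplication by `l : Γ` as an `R`-linear endomorphism. -/
def lsmulG (l : Γ) : M →ₗ[R] M where
  toFun m := l • m
  map_add' x y := smul_add l x y
  map_smul' r m := smul_comm l r m

/-- The `Γ'`-module structure on the `R`-dual of a `Γ`-module, via the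
anti-homomorphism `a : Γ' → Γ`. -/
def dMod : Module Γ' (M →ₗ[R] R) where
  smul x ν := ν ∘ₗ lsmulG R M (a x)
  one_smul ν := LinearMap.ext fun m => by
    show ν (a 1 • m) = ν m
    rw [ha.map_one, one_smul]
  mul_smul x y ν := LinearMap.ext fun m => by
    show ν (a (x * y) • m) = ν (a y • a x • m)
    rw [ha.map_mul, mul_smul]
  smul_zero x := LinearMap.ext fun m => rfl
  smul_add x ν₁ ν₂ := LinearMap.ext fun m => rfl
  add_smul x y ν := LinearMap.ext fun m => by
    show ν (a (x + y) • m) = ν (a x • m) + ν (a y • m)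
    rw [ha.map_add, add_smul, map_add]
  zero_smul ν := LinearMap.ext fun m => by
    show ν (a 0 • m) = 0
    rw [ha.map_zero, zero_smul, map_zero]

theorem dMod_smul_apply (x : Γ') (ν : M →ₗ[R] R) (m : M) :
    letI := dMod R a ha M
    (x • ν) m = ν (a x • m) := rfl

/-- Scalar tower for the dual module structure. -/
theorem dTower : letI := dMod R a ha M; IsScalarTower R Γ' (M →ₗ[R] R) := by
  letI := dMod R a ha M
  refine ⟨fun r x ν => ?_⟩
  refine LinearMap.ext fun m => ?_
  show ν (a (r • x) • m) = r • ν (a x • m)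
  rw [Algebra.smul_def, ha.map_mul, ha.map_alg, mul_smul, algebraMap_smul,
    ← map_smul, smul_comm]

theorem dFinite [Module.Finite R Γ] [Module.Finite Γ M] [Module.Projective R M] :
    letI := dMod R a ha M; Module.Finite Γ' (M →ₗ[R] R) := by
  letI := dMod R a ha M
  haveI := dTower R a ha M
  haveI : Module.Finite R M := Module.Finite.trans Γ M
  exact Module.Finite.of_restrictScalars_finite R Γ' (M →ₗ[R] R)

theorem dProj [Module.Finite R Γ] [Module.Finite Γ M] [Module.Projective R M] :
    Module.Projective R (M →ₗ[R] R) := by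
  haveI : Module.Finite R M := Module.Finite.trans Γ M
  infer_instance

end DMod

variable [Module.Finite R Γ]

/-- The dual lattice. -/
def dLat (M : LatMod R Γ) : LatMod R Γ' :=
  @LatMod.mk R Γ' _ _ _ (M.carrier →ₗ[R] R) _
    (dMod R a ha M.carrier) _
    (dTower R a ha M.carrier)
    (dFinite R a ha M.carrier)
    (dProj R (Γ := Γ) M.carrier)

end Dual


/-! ### The induced map on Grothendieck groups -/

section Hom

variable (R : Type) [CommRing R] {Γ Γ' : Type} [Ring Γ] [Algebra R Γ]
  [Ring Γ'] [Algebra R Γ'] (a : Γ' → Γ) (ha : IsAntiAlgHom R a)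

section DMap0

variable {Lc Mc : Type} [AddCommGroup Lc] [Module Γ Lc] [Module R Lc] [IsScalarTower R Γ Lc]
  [AddCommGroup Mc] [Module Γ Mc] [Module R Mc] [IsScalarTower R Γ Mc]

/-- The dual of a `Γ`-linear map, as a `Γ'`-linear map between the `R`-duals. -/
def dMap0 (f : Lc →ₗ[Γ] Mc) :
    letI := dMod R a ha Mc; letI := dMod R a ha Lc
    (Mc →ₗ[R] R) →ₗ[Γ'] (Lc →ₗ[R] R) := by
  letI := dMod R a ha Mc; letI := dMod R a ha Lc
  refine ⟨⟨fun ν => ν ∘ₗ f.restrictScalars R, fun _ _ => rfl⟩, fun x ν => ?_⟩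
  refine LinearMap.ext fun m => ?_
  show ν (a x • f m) = ν (f (a x • m))
  exact congrArg ν (f.map_smul (a x) m).symm

theorem dMap0_apply (f : Lc →ₗ[Γ] Mc) (ν : Mc →ₗ[R] R) :
    dMap0 R a ha f ν = ν ∘ₗ f.restrictScalars R := rfl

end DMap0

variable [Module.Finite R Γ]

theorem clsB_dual_rel {L M N : LatMod R Γ} (f : L.carrier →ₗ[Γ] M.carrier)
    (g : M.carrier →ₗ[Γ] N.carrier) (hf : Injective f) (hg : Surjective g)
    (hfg : Exact f g) :
    clsB R Γ' (dLat R a ha M)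
      = clsB R Γ' (dLat R a ha N) + clsB R Γ' (dLat R a ha L) := by
  have hf' : Injective (f.restrictScalars R) := hf
  have hg' : Surjective (g.restrictScalars R) := hg
  have hfg' : Exact (f.restrictScalars R) (g.restrictScalars R) := hfg
  refine clsB_rel (dLat R a ha N) (dLat R a ha M) (dLat R a ha L)
    (dMap0 R a ha g) (dMap0 R a ha f) ?_ ?_ ?_
  · exact dual_inj R (g.restrictScalars R) hg'
  · exact dual_surj R (f.restrictScalars R) (g.restrictScalars R) hf' hfg' hg'
  · exact dual_exact R (f.restrictScalars R) (g.restrictScalars R) hf' hfg' hg'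

/-- The additive map `G₀(Γ) → G₀(Γ')` induced by dualization. -/
noncomputable def dHom : G0Lat R Γ →+ G0Lat R Γ' :=
  QuotientAddGroup.lift (G0LatRel R Γ)
    (FreeAbelianGroup.lift (fun M => clsB R Γ' (dLat R a ha M))) (by
      intro x hx
      have hle : G0LatRel R Γ ≤
          (FreeAbelianGroup.lift (fun M => clsB R Γ' (dLat R a ha M))).ker := by
        refine (AddSubgroup.closure_le _).mpr ?_
        rintro x ⟨L, M, N, f, g, hf, hg, hfg, rfl⟩
        simp only [SetLike.mem_coe, AddMonoidHom.mem_ker, map_sub,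
          FreeAbelianGroup.lift_apply_of]
        rw [clsB_dual_rel R a ha f g hf hg hfg]
        abel
      exact AddMonoidHom.mem_ker.mp (hle hx))

theorem dHom_clsB (M : LatMod R Γ) :
    dHom R a ha (clsB R Γ M) = clsB R Γ' (dLat R a ha M) := by
  show QuotientAddGroup.lift _ _ _ (QuotientAddGroup.mk _) = _
  erw [QuotientAddGroup.lift_mk', FreeAbelianGroup.lift_apply_of]

end Hom


/-! ### The double dual -/

section Double

variable (R : Type) [CommRing R] {Γ Γ' : Type} [Ring Γ] [Algebra R Γ]
  [Ring Γ'] [Algebra R Γ'] (a : Γ' → Γ) (ha : IsAntiAlgHom R a)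
  (b : Γ → Γ') (hb : IsAntiAlgHom R b)
  [Module.Finite R Γ] [Module.Finite R Γ']

theorem clsB_double_dual (hab : ∀ x, a (b x) = x) (M : LatMod R Γ) :
    clsB R Γ (dLat R b hb (dLat R a ha M)) = clsB R Γ M := by
  refine (clsB_congr M (dLat R b hb (dLat R a ha M)) ?_).symm
  haveI : Module.Finite R M.carrier := Module.Finite.trans Γ M.carrier
  letI i1 : Module Γ' (M.carrier →ₗ[R] R) := dMod R a ha M.carrier
  haveI := dTower R a ha M.carrier
  letI i2 : Module Γ ((M.carrier →ₗ[R] R) →ₗ[R] R) := dMod R b hb (M.carrier →ₗ[R] R)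
  have hbij : Function.Bijective (Module.Dual.eval R M.carrier) :=
    Module.IsReflexive.bijective_dual_eval'
  refine LinearEquiv.ofBijective ⟨⟨fun m => Module.Dual.eval R M.carrier m,
    fun x y => map_add _ x y⟩, fun l m => ?_⟩ hbij
  refine LinearMap.ext fun ν => ?_
  show ν (l • m) = ν (a (b l) • m)
  rw [hab]

end Double

/-! ### The equivalence -/

section Equiv

variable (R : Type) [CommRing R] {Γ Γ' : Type} [Ring Γ] [Algebra R Γ]
  [Ring Γ'] [Algebra R Γ'] (a : Γ' → Γ) (ha : IsAntiAlgHom R a)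
  (b : Γ → Γ') (hb : IsAntiAlgHom R b)
  [Module.Finite R Γ] [Module.Finite R Γ']

theorem dHom_dHom (hab : ∀ x, a (b x) = x) (x : G0Lat R Γ) :
    dHom R b hb (dHom R a ha x) = x := by
  induction x using QuotientAddGroup.induction_on with
  | _ z =>
    refine FreeAbelianGroup.induction_on z ?_ ?_ ?_ ?_
    · show dHom R b hb (dHom R a ha (QuotientAddGroup.mk 0)) = QuotientAddGroup.mk 0
      erw [QuotientAddGroup.mk_zero, map_zero]
      rfl
    · intro M
      show dHom R b hb (dHom R a ha (clsB R Γ M)) = clsB R Γ M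
      rw [dHom_clsB, dHom_clsB, clsB_double_dual R a ha b hb hab]
    · intro M h
      show dHom R b hb (dHom R a ha (QuotientAddGroup.mk (-FreeAbelianGroup.of M)))
          = QuotientAddGroup.mk (-FreeAbelianGroup.of M)
      erw [QuotientAddGroup.mk_neg, map_neg, map_neg, h]
      rfl
    · intro x y hx hy
      show dHom R b hb (dHom R a ha (QuotientAddGroup.mk (x + y)))
          = QuotientAddGroup.mk (x + y)
      erw [QuotientAddGroup.mk_add, map_add, map_add, hx, hy]
      rfl

/-- The duality equivalence on Grothendieck groups. -/
noncomputable def dEquiv (hab : ∀ x, a (b x) = x) (hba : ∀ y, b (a y) = y) :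
    G0Lat R Γ ≃+ G0Lat R Γ' where
  toFun := dHom R a ha
  invFun := dHom R b hb
  left_inv := dHom_dHom R a ha b hb hab
  right_inv := dHom_dHom R b hb a ha hba
  map_add' := map_add _

theorem dEquiv_clsB (hab : ∀ x, a (b x) = x) (hba : ∀ y, b (a y) = y) (M : LatMod R Γ) :
    dEquiv R a ha b hb hab hba (clsB R Γ M) = clsB R Γ' (dLat R a ha M) :=
  dHom_clsB R a ha M

end Equiv

end Stmt5Aux

open Stmt5Aux in

open Stmt5Aux in
theorem stmt5 (R : Type) [CommRing R] [IsDomain R] [IsDedekindDomain R]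
    (Λ : Type) [Ring Λ] [Algebra R Λ] [Module.Finite R Λ] [Module.Projective R Λ] :
    (∀ (L M N : Type)
      [AddCommGroup L] [Module Λ L] [Module R L] [IsScalarTower R Λ L]
        [Module.Finite Λ L] [Module.Projective R L]
      [AddCommGroup M] [Module Λ M] [Module R M] [IsScalarTower R Λ M]
        [Module.Finite Λ M] [Module.Projective R M]
      [AddCommGroup N] [Module Λ N] [Module R N] [IsScalarTower R Λ N]
        [Module.Finite Λ N] [Module.Projective R N]
      (f : L →ₗ[Λ] M) (g : M →ₗ[Λ] N),
      Function.Injective f → Function.Surjective g → Function.Exact f g →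
        (Function.Injective (LinearMap.lcomp R R (g.restrictScalars R) :
            (N →ₗ[R] R) →ₗ[R] (M →ₗ[R] R)) ∧
          Function.Surjective (LinearMap.lcomp R R (f.restrictScalars R) :
            (M →ₗ[R] R) →ₗ[R] (L →ₗ[R] R)) ∧
          Function.Exact (LinearMap.lcomp R R (g.restrictScalars R) :
              (N →ₗ[R] R) →ₗ[R] (M →ₗ[R] R))
            (LinearMap.lcomp R R (f.restrictScalars R) :
              (M →ₗ[R] R) →ₗ[R] (L →ₗ[R] R)))) ∧
      ∃ σ : G0Lat R Λ ≃+ G0Lat R Λᵐᵒᵖ,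
        ∀ (M : Type) [AddCommGroup M] [Module Λ M] [Module R M] [IsScalarTower R Λ M]
            [Module.Finite Λ M] [Module.Projective R M]
            [Module Λᵐᵒᵖ (M →ₗ[R] R)] [IsScalarTower R Λᵐᵒᵖ (M →ₗ[R] R)]
            [Module.Finite Λᵐᵒᵖ (M →ₗ[R] R)] [Module.Projective R (M →ₗ[R] R)],
          (∀ (l : Λ) (ν : M →ₗ[R] R) (m : M), (MulOpposite.op l • ν) m = ν (l • m)) →
          σ (G0Lat.cls R Λ M) = G0Lat.cls R Λᵐᵒᵖ (M →ₗ[R] R) := by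
  classical
  haveI hfinop : Module.Finite R Λᵐᵒᵖ :=
    Module.Finite.equiv (MulOpposite.opLinearEquiv R : Λ ≃ₗ[R] Λᵐᵒᵖ)
  have ha : IsAntiAlgHom R (MulOpposite.unop : Λᵐᵒᵖ → Λ) :=
    ⟨rfl, fun _ _ => rfl, fun _ _ => rfl, rfl, fun _ => rfl⟩
  have hb : IsAntiAlgHom R (MulOpposite.op : Λ → Λᵐᵒᵖ) :=
    ⟨rfl, fun _ _ => rfl, fun _ _ => rfl, rfl, fun _ => rfl⟩
  constructor
  · intro L M N _ _ _ _ _ _ _ _ _ _ _ _ _ _ _ _ _ _ f g hf hg hfg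
    have hf' : Function.Injective (f.restrictScalars R) := hf
    have hg' : Function.Surjective (g.restrictScalars R) := hg
    have hfg' : Function.Exact (f.restrictScalars R) (g.restrictScalars R) := hfg
    refine ⟨?_, ?_, ?_⟩
    · exact dual_inj R (g.restrictScalars R) hg'
    · exact dual_surj R (f.restrictScalars R) (g.restrictScalars R) hf' hfg' hg'
    · exact dual_exact R (f.restrictScalars R) (g.restrictScalars R) hf' hfg' hg'
  · refine ⟨dEquiv R MulOpposite.unop ha MulOpposite.op hb
      (fun x => MulOpposite.unop_op x) (fun y => MulOpposite.op_unop y), ?_⟩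
    intro M _ _ _ _ _ _ instOp instTowOp instFinOp instProjOp hsmul
    have h1 : dEquiv R MulOpposite.unop ha MulOpposite.op hb
        (fun x => MulOpposite.unop_op x) (fun y => MulOpposite.op_unop y)
        (G0Lat.cls R Λ M)
        = clsB R Λᵐᵒᵖ (dLat R MulOpposite.unop ha (LatMod.mk M)) :=
      dEquiv_clsB R MulOpposite.unop ha MulOpposite.op hb _ _ (LatMod.mk M)
    rw [h1]
    refine clsB_congr (dLat R MulOpposite.unop ha (LatMod.mk M))
      (LatMod.mk (M →ₗ[R] R)) ?_
    refine LinearEquiv.mk ⟨⟨fun ν => ν, fun _ _ => rfl⟩, fun x ν => ?_⟩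
      (fun ν => ν) (fun _ => rfl) (fun _ => rfl)
    refine LinearMap.ext fun m => ?_
    have key := hsmul (MulOpposite.unop x) ν m
    rw [MulOpposite.op_unop] at key
    exact (dMod_smul_apply R MulOpposite.unop ha M x ν m).trans key.symm
end

section
/- Let G be a finite group, and let S and S' be finite G-sets all of whose point stabilisers are cyclic. If the permutation modules ℚ[S] and ℚ[S'] are isomorphic as ℚ[G]-modules, then S and S' are isomorphic as G-sets; in particular ℤ[S] and ℤ[S'] are then isomorphic as ℤ[G]-modules. -/
open MulAction Finsupp

section Helpers

variable {G : Type} [Group G] {S S' : Type} [MulAction G S] [MulAction G S']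

/-- Trace of the permutation operator equals the number of fixed points. -/
lemma stmt16_traceA (G : Type) [Group G] (S : Type) [Fintype S] [MulAction G S] (g : G)
    [Fintype {x : S // g • x = x}] :
    LinearMap.trace ℚ (S →₀ ℚ) (Finsupp.lmapDomain ℚ ℚ (fun s : S => g • s)) =
      Fintype.card {x : S // g • x = x} := by
  classical
  rw [LinearMap.trace_eq_matrix_trace ℚ (Finsupp.basisSingleOne (R := ℚ) (ι := S))]
  rw [Matrix.trace]
  have h : ∀ j : S, (LinearMap.toMatrix Finsupp.basisSingleOne Finsupp.basisSingleOne
      (Finsupp.lmapDomain ℚ ℚ (fun s : S => g • s))) j j = if g • j = j then 1 else 0 := by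
    intro j
    rw [LinearMap.toMatrix_apply]
    simp [Finsupp.single_apply]
  simp only [Matrix.diag, h, Finset.sum_boole]
  norm_cast
  exact (Fintype.card_of_subtype (Finset.univ.filter (fun x => g • x = x)) (fun x => by simp)).symm

noncomputable def stmt16_ow {s : S} (x : orbit G s) : G :=
  Classical.choose (mem_orbit_iff.1 x.2)

lemma stmt16_ow_spec {s : S} (x : orbit G s) : stmt16_ow x • s = (x : S) :=
  Classical.choose_spec (mem_orbit_iff.1 x.2)

lemma stmt16_key {s : S} {s' : S'} (h : stabilizer G s = stabilizer G s')
    {g g' : G} (hg : g • s = g' • s) : g • s' = g' • s' := by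
  have h1 : g'⁻¹ * g ∈ stabilizer G s := by
    rw [mem_stabilizer_iff, mul_smul, hg, ← mul_smul, inv_mul_cancel, one_smul]
  rw [h, mem_stabilizer_iff, mul_smul] at h1
  calc g • s' = g' • g'⁻¹ • g • s' := by rw [smul_inv_smul]
  _ = g' • s' := by rw [h1]

noncomputable def stmt16_omap (s : S) (s' : S') (x : orbit G s) : orbit G s' :=
  ⟨stmt16_ow x • s', mem_orbit _ _⟩

lemma stmt16_omap_inv {s : S} {s' : S'} (h : stabilizer G s = stabilizer G s')
    (x : orbit G s) : stmt16_omap s' s (stmt16_omap s s' x) = x := by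
  apply Subtype.ext
  have h1 : stmt16_ow (stmt16_omap s s' x) • s' = stmt16_ow x • s' :=
    stmt16_ow_spec (stmt16_omap s s' x)
  have h2 : stmt16_ow (stmt16_omap s s' x) • s = stmt16_ow x • s := stmt16_key h.symm h1
  show stmt16_ow (stmt16_omap s s' x) • s = (x : S)
  rw [h2, stmt16_ow_spec]

/-- The equivariant bijection between two orbits with equal stabilizers. -/
noncomputable def stmt16_orbitE {s : S} {s' : S'} (h : stabilizer G s = stabilizer G s') :
    orbit G s ≃ orbit G s' where
  toFun := stmt16_omap s s'
  invFun := stmt16_omap s' s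
  left_inv := stmt16_omap_inv h
  right_inv := stmt16_omap_inv h.symm

lemma stmt16_orbitE_equivariant {s : S} {s' : S'} (h : stabilizer G s = stabilizer G s')
    (g : G) (x : orbit G s) (h2 : g • (x : S) ∈ orbit G s) :
    (stmt16_orbitE h ⟨g • (x : S), h2⟩ : S') = g • (stmt16_orbitE h x : S') := by
  have h1 : stmt16_ow (⟨g • (x : S), h2⟩ : orbit G s) • s = (g * stmt16_ow x) • s := by
    rw [stmt16_ow_spec, mul_smul, stmt16_ow_spec]
  have h3 := stmt16_key h h1
  show stmt16_ow (⟨g • (x : S), h2⟩ : orbit G s) • s' = g • (stmt16_ow x • s')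
  rw [h3, mul_smul]

lemma stmt16_fix_congr (f : S ≃ S') (hf : ∀ (g : G) (x : S), f (g • x) = g • f x) (g : G) :
    Nat.card {x : S // g • x = x} = Nat.card {x : S' // g • x = x} := by
  apply Nat.card_congr
  apply f.subtypeEquiv
  intro x
  constructor
  · intro hx
    rw [← hf, hx]
  · intro hx
    apply f.injective
    rw [hf, hx]

lemma stmt16_mem_orbit_smul_iff (s x : S) (g : G) :
    g • x ∈ orbit G s ↔ x ∈ orbit G s := by
  constructor
  · intro hx
    obtain ⟨k, hk⟩ := mem_orbit_iff.1 hx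
    rw [mem_orbit_iff]
    exact ⟨g⁻¹ * k, by rw [mul_smul, hk, inv_smul_smul]⟩
  · intro hx
    obtain ⟨k, hk⟩ := mem_orbit_iff.1 hx
    rw [mem_orbit_iff]
    exact ⟨g * k, by rw [mul_smul, hk]⟩

end Helpers

section Two

variable {G : Type} [Group G] {S S' : Type} [MulAction G S] [MulAction G S']

lemma stmt16_fix_split [Finite S] (g : G) (p : S → Prop) :
    Nat.card {x : S // g • x = x} =
      Nat.card {y : {x : S // p x} // g • (y : S) = (y : S)} +
        Nat.card {y : {x : S // ¬ p x} // g • (y : S) = (y : S)} := by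
  classical
  rw [Nat.card_congr (Equiv.sumCompl (fun y : {x : S // g • x = x} => p (y : S))).symm,
    Nat.card_sum]
  congr 1
  · exact Nat.card_congr ((Equiv.subtypeSubtypeEquivSubtypeInter _ _).trans
      ((Equiv.subtypeEquivRight (fun x => and_comm)).trans
        (Equiv.subtypeSubtypeEquivSubtypeInter p _).symm))
  · exact Nat.card_congr ((Equiv.subtypeSubtypeEquivSubtypeInter _ _).trans
      ((Equiv.subtypeEquivRight (fun x => and_comm)).trans
        (Equiv.subtypeSubtypeEquivSubtypeInter (fun x => ¬ p x) _).symm))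

lemma stmt16_orbit_fix_congr {x₀ : S} {x₀' : S'} (heq : stabilizer G x₀ = stabilizer G x₀')
    (g : G) :
    Nat.card {y : orbit G x₀ // g • (y : S) = (y : S)} =
      Nat.card {y : orbit G x₀' // g • (y : S') = (y : S')} := by
  apply Nat.card_congr
  refine Equiv.subtypeEquiv (stmt16_orbitE heq) fun y => ⟨?_, ?_⟩
  · intro hy
    have h2 : g • (y : S) ∈ orbit G x₀ := by rw [hy]; exact y.2
    have h3 := stmt16_orbitE_equivariant heq g y h2
    rw [show (⟨g • (y : S), h2⟩ : orbit G x₀) = y from Subtype.ext hy] at h3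
    exact h3.symm
  · intro hy
    have h2 : g • (y : S) ∈ orbit G x₀ := (stmt16_mem_orbit_smul_iff _ _ _).2 y.2
    have h3 := stmt16_orbitE_equivariant heq g y h2
    rw [hy] at h3
    have h4 : (⟨g • (y : S), h2⟩ : orbit G x₀) = y :=
      (stmt16_orbitE heq).injective (Subtype.ext h3)
    exact congrArg Subtype.val h4

lemma stmt16_stab_eq [Finite G] {x₀ : S} {g₀ : G} (hc : IsCyclic (stabilizer G x₀))
    (hg₀ : g₀ • x₀ = x₀) (hmax : ∀ h : G, (∃ x : S, h • x = x) → orderOf h ≤ orderOf g₀) :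
    stabilizer G x₀ = Subgroup.zpowers g₀ := by
  obtain ⟨h, hgen⟩ := hc.exists_generator
  have hle : Subgroup.zpowers g₀ ≤ stabilizer G x₀ := Subgroup.zpowers_le.2 hg₀
  have hhs : (h : G) • x₀ = x₀ := h.2
  have hcard : Nat.card (stabilizer G x₀) ≤ Nat.card (Subgroup.zpowers g₀) := by
    classical
    letI := Fintype.ofFinite (stabilizer G x₀)
    have h6 : Nat.card (stabilizer G x₀) = orderOf (h : G) := by
      calc Nat.card (stabilizer G x₀)
          = orderOf h := (orderOf_eq_card_of_forall_mem_zpowers hgen).symm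
        _ = orderOf (h : G) := (Subgroup.orderOf_coe h).symm
    rw [Nat.card_zpowers, h6]
    exact hmax _ ⟨x₀, hhs⟩
  exact (Subgroup.eq_of_le_of_card_ge hle hcard).symm

/-- Action of `G` on the complement of an orbit. -/
def stmt16_complAction (s : S) : MulAction G {x : S // x ∉ orbit G s} where
  smul g y := ⟨g • y.1, fun h => y.2 ((stmt16_mem_orbit_smul_iff s y.1 g).1 h)⟩
  one_smul y := Subtype.ext (one_smul G y.1)
  mul_smul a b y := Subtype.ext (mul_smul a b y.1)

end Two

open MulAction in
lemma stmt16_burnside (G : Type) [Group G] [Finite G] :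
    ∀ (n : ℕ) (S S' : Type) [Finite S] [Finite S'] [MulAction G S] [MulAction G S'],
    Nat.card S = n →
    (∀ s : S, IsCyclic (stabilizer G s)) →
    (∀ s : S', IsCyclic (stabilizer G s)) →
    (∀ g : G, Nat.card {x : S // g • x = x} = Nat.card {x : S' // g • x = x}) →
    ∃ f : S ≃ S', ∀ (g : G) (x : S), f (g • x) = g • f x := by
  intro n
  induction n using Nat.strong_induction_on with
  | _ n IH =>
    intro S S' _ _ _ _ hn hc hc' hfix
    classical
    rcases isEmpty_or_nonempty S with hS | hS
    · -- base case : S empty, hence S' empty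
      have h0 : Nat.card {x : S' // (1 : G) • x = x} = 0 := by
        rw [← hfix 1, Nat.card_eq_zero]
        exact Or.inl (by infer_instance)
      rw [Nat.card_congr (Equiv.subtypeUnivEquiv (fun x => one_smul G x)),
        Nat.card_eq_zero] at h0
      have hS' : IsEmpty S' := by
        rcases h0 with h0 | h0
        · exact h0
        · exact absurd h0 (not_infinite_iff_finite.2 ‹Finite S'›)
      exact ⟨Equiv.equivOfIsEmpty S S', fun g x => hS.elim x⟩
    · letI := Fintype.ofFinite G
      obtain ⟨x⟩ := hS
      -- pick an element of maximal order having a fixed point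
      have hne : (Finset.univ.filter (fun g : G => ∃ x : S, g • x = x)).Nonempty :=
        ⟨1, by
          simp only [Finset.mem_filter, Finset.mem_univ, true_and]
          exact ⟨x, one_smul _ _⟩⟩
      obtain ⟨g₀, hg₀mem, hg₀max⟩ := Finset.exists_max_image _ orderOf hne
      simp only [Finset.mem_filter, Finset.mem_univ, true_and] at hg₀mem
      have hg₀max' : ∀ h : G, (∃ x : S, h • x = x) → orderOf h ≤ orderOf g₀ := by
        intro h hh
        exact hg₀max h (by simp only [Finset.mem_filter, Finset.mem_univ, true_and]; exact hh)
      obtain ⟨x₀, hx₀⟩ := hg₀mem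
      -- a fixed point of g₀ in S'
      obtain ⟨x₀', hx₀'⟩ : ∃ y : S', g₀ • y = y := by
        have hpos : Nat.card {x : S' // g₀ • x = x} ≠ 0 := by
          rw [← hfix]
          exact Nat.card_ne_zero.2 ⟨⟨⟨x₀, hx₀⟩⟩, inferInstance⟩
        obtain ⟨⟨y, hy⟩⟩ := (Nat.card_ne_zero.1 hpos).1
        exact ⟨y, hy⟩
      -- the max-order fixed elements on S' transfer
      have hg₀max'' : ∀ h : G, (∃ x : S', h • x = x) → orderOf h ≤ orderOf g₀ := by
        intro h ⟨y, hy⟩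
        apply hg₀max'
        have hpos : Nat.card {x : S // h • x = x} ≠ 0 := by
          rw [hfix]
          exact Nat.card_ne_zero.2 ⟨⟨⟨y, hy⟩⟩, inferInstance⟩
        obtain ⟨⟨z, hz⟩⟩ := (Nat.card_ne_zero.1 hpos).1
        exact ⟨z, hz⟩
      have hstab : stabilizer G x₀ = Subgroup.zpowers g₀ := stmt16_stab_eq (hc x₀) hx₀ hg₀max'
      have hstab' : stabilizer G x₀' = Subgroup.zpowers g₀ :=
        stmt16_stab_eq (hc' x₀') hx₀' hg₀max''
      have heq : stabilizer G x₀ = stabilizer G x₀' := hstab.trans hstab'.symm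
      -- complement actions
      letI iQ : MulAction G {y : S // y ∉ orbit G x₀} := stmt16_complAction x₀
      letI iQ' : MulAction G {y : S' // y ∉ orbit G x₀'} := stmt16_complAction x₀'
      -- stabilizers on complements are cyclic
      have hstabQ : ∀ y : {y : S // y ∉ orbit G x₀},
          stabilizer G y = stabilizer G (y : S) := by
        intro y
        ext g
        simp only [mem_stabilizer_iff]
        exact ⟨fun h => congrArg Subtype.val h, fun h => Subtype.ext h⟩
      have hstabQ' : ∀ y : {y : S' // y ∉ orbit G x₀'},
          stabilizer G y = stabilizer G (y : S') := by
        intro y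
        ext g
        simp only [mem_stabilizer_iff]
        exact ⟨fun h => congrArg Subtype.val h, fun h => Subtype.ext h⟩
      -- fixed point counts on complements agree
      have hfixQ : ∀ g : G, Nat.card {y : {y : S // y ∉ orbit G x₀} // g • y = y} =
          Nat.card {y : {y : S' // y ∉ orbit G x₀'} // g • y = y} := by
        intro g
        have hsplit := stmt16_fix_split (S := S) g (fun y => y ∈ orbit G x₀)
        have hsplit' := stmt16_fix_split (S := S') g (fun y => y ∈ orbit G x₀')
        have horb := stmt16_orbit_fix_congr heq g
        have htot := hfix g
        rw [hsplit, hsplit', horb] at htot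
        have h2 := Nat.add_left_cancel htot
        have e1 : {y : {y : S // y ∉ orbit G x₀} // g • y = y} ≃
            {y : {y : S // ¬ y ∈ orbit G x₀} // g • (y : S) = (y : S)} :=
          Equiv.subtypeEquivRight (fun y => ⟨fun h => congrArg Subtype.val h,
            fun h => Subtype.ext h⟩)
        have e2 : {y : {y : S' // y ∉ orbit G x₀'} // g • y = y} ≃
            {y : {y : S' // ¬ y ∈ orbit G x₀'} // g • (y : S') = (y : S')} :=
          Equiv.subtypeEquivRight (fun y => ⟨fun h => congrArg Subtype.val h,
            fun h => Subtype.ext h⟩)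
        rw [Nat.card_congr e1, Nat.card_congr e2, h2]
      -- the complement is smaller
      have hlt : Nat.card {y : S // y ∉ orbit G x₀} < n := by
        have h1 : Nat.card {y : S // y ∉ orbit G x₀} = ((orbit G x₀)ᶜ : Set S).ncard := by
          rw [← Nat.card_coe_set_eq]
          exact Nat.card_congr (Equiv.subtypeEquivRight (fun y => Iff.rfl))
        rw [h1, ← hn, ← Set.ncard_univ]
        apply Set.ncard_lt_ncard _ Set.finite_univ
        rw [Set.ssubset_univ_iff]
        intro h
        have := Set.eq_univ_iff_forall.1 h x₀
        exact this (mem_orbit_self x₀)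
      obtain ⟨f₂, hf₂⟩ := IH _ hlt {y : S // y ∉ orbit G x₀} {y : S' // y ∉ orbit G x₀'} rfl
        (fun y => (hstabQ y) ▸ hc (y : S)) (fun y => (hstabQ' y) ▸ hc' (y : S')) hfixQ
      -- assemble the equivalence
      let f₁ := stmt16_orbitE heq
      let eA : ((orbit G x₀)ᶜ : Set S) ≃ {y : S // y ∉ orbit G x₀} :=
        Equiv.subtypeEquivRight (fun y => Iff.rfl)
      let eA' : ((orbit G x₀')ᶜ : Set S') ≃ {y : S' // y ∉ orbit G x₀'} :=
        Equiv.subtypeEquivRight (fun y => Iff.rfl)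
      let f : S ≃ S' := (Equiv.Set.sumCompl (orbit G x₀)).symm.trans
        ((Equiv.sumCongr f₁ (eA.trans (f₂.trans eA'.symm))).trans
          (Equiv.Set.sumCompl (orbit G x₀')))
      refine ⟨f, fun g y => ?_⟩
      by_cases hy : y ∈ orbit G x₀
      · have hgy : g • y ∈ orbit G x₀ := (stmt16_mem_orbit_smul_iff _ _ _).2 hy
        have hv1 : f y = (f₁ ⟨y, hy⟩ : S') := by
          simp only [f, Equiv.trans_apply, Equiv.Set.sumCompl_symm_apply_of_mem hy,
            Equiv.sumCongr_apply, Sum.map_inl, Equiv.Set.sumCompl_apply_inl]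
        have hv2 : f (g • y) = (f₁ ⟨g • y, hgy⟩ : S') := by
          simp only [f, Equiv.trans_apply, Equiv.Set.sumCompl_symm_apply_of_mem hgy,
            Equiv.sumCongr_apply, Sum.map_inl, Equiv.Set.sumCompl_apply_inl]
        rw [hv1, hv2]
        exact stmt16_orbitE_equivariant heq g ⟨y, hy⟩ hgy
      · have hgy : g • y ∉ orbit G x₀ := fun h =>
          hy ((stmt16_mem_orbit_smul_iff _ _ _).1 h)
        have hv1 : f y = ((f₂ ⟨y, hy⟩ : {y : S' // y ∉ orbit G x₀'}) : S') := by
          simp only [f, Equiv.trans_apply, Equiv.Set.sumCompl_symm_apply_of_notMem hy,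
            Equiv.sumCongr_apply, Sum.map_inr, Equiv.Set.sumCompl_apply_inr]
          rfl
        have hv2 : f (g • y) = ((f₂ ⟨g • y, hgy⟩ : {y : S' // y ∉ orbit G x₀'}) : S') := by
          simp only [f, Equiv.trans_apply, Equiv.Set.sumCompl_symm_apply_of_notMem hgy,
            Equiv.sumCongr_apply, Sum.map_inr, Equiv.Set.sumCompl_apply_inr]
          rfl
        rw [hv1, hv2]
        have h5 : (⟨g • y, hgy⟩ : {y : S // y ∉ orbit G x₀}) = g • ⟨y, hy⟩ := rfl
        rw [h5, hf₂ g ⟨y, hy⟩]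
        rfl

theorem stmt16 (G : Type) [Group G] [Finite G]
    (S S' : Type) [Fintype S] [Fintype S'] [MulAction G S] [MulAction G S']
    (hcyc : ∀ s : S, IsCyclic (MulAction.stabilizer G s))
    (hcyc' : ∀ s : S', IsCyclic (MulAction.stabilizer G s))
    (hiso : ∃ e : (S →₀ ℚ) ≃ₗ[ℚ] (S' →₀ ℚ), ∀ (g : G) (x : S →₀ ℚ),
      e (Finsupp.mapDomain (fun s => g • s) x) = Finsupp.mapDomain (fun s => g • s) (e x)) :
    (∃ f : S ≃ S', ∀ (g : G) (s : S), f (g • s) = g • f s) ∧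
      (∃ e₂ : (S →₀ ℤ) ≃ₗ[ℤ] (S' →₀ ℤ), ∀ (g : G) (x : S →₀ ℤ),
        e₂ (Finsupp.mapDomain (fun s => g • s) x) =
          Finsupp.mapDomain (fun s => g • s) (e₂ x)) := by
  classical
  obtain ⟨e, he⟩ := hiso
  have hfix : ∀ g : G, Nat.card {x : S // g • x = x} = Nat.card {x : S' // g • x = x} := by
    intro g
    have h1 : e.conj (Finsupp.lmapDomain ℚ ℚ (fun s : S => g • s)) =
        Finsupp.lmapDomain ℚ ℚ (fun s : S' => g • s) := by
      apply LinearMap.ext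
      intro y
      rw [LinearEquiv.conj_apply_apply, Finsupp.lmapDomain_apply, Finsupp.lmapDomain_apply,
        he g (e.symm y), e.apply_symm_apply]
    have h2 := LinearMap.trace_conj' (Finsupp.lmapDomain ℚ ℚ (fun s : S => g • s)) e
    rw [h1, stmt16_traceA, stmt16_traceA] at h2
    have h3 : Fintype.card {x : S // g • x = x} = Fintype.card {x : S' // g • x = x} := by
      exact_mod_cast h2.symm
    rw [Nat.card_eq_fintype_card, Nat.card_eq_fintype_card, h3]
  obtain ⟨f, hf⟩ := stmt16_burnside G (Nat.card S) S S' rfl hcyc hcyc' hfix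
  refine ⟨⟨f, hf⟩, ⟨Finsupp.domLCongr f, fun g x => ?_⟩⟩
  have hval : ∀ y : S →₀ ℤ, (Finsupp.domLCongr f : (S →₀ ℤ) ≃ₗ[ℤ] (S' →₀ ℤ)) y =
      Finsupp.mapDomain f y := by
    intro y
    rw [Finsupp.domLCongr_apply, Finsupp.domCongr_apply, Finsupp.equivMapDomain_eq_mapDomain]
  rw [hval, hval, ← Finsupp.mapDomain_comp, ← Finsupp.mapDomain_comp]
  congr 1
  funext s
  exact hf g s
end
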